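/- arXiv:1805.12281 — 4 statements merged into one kernel-verified Lean document; each statement's English description precedes it below -/
import Mathlib

section
/- Let M ≥ 1 be a natural number and let η > 0, Δ > 0, λ > 0, α > 0, ν ∈ ℝ and 0 ≤ R_C < R_B be real numbers. Define the probability density f(r) = 2Δλ r e^{−Δλ(r² − R_C²)}/(1 − e^{−Δλ(R_B² − R_C²)}) on (R_C, R_B). Then (1/(2Δ)) ∫_{ν−Δ}^{ν+Δ} ∫_{R_C}^{R_B} (η(1+r^α)/M) · (1 + π² M² (ν−θ)²/12) · f(r) dr dθ = (η λ/(M(1 − e^{−Δλ(R_B² − R_C²)}))) · (2Δ + π² M² Δ³/18) · e^{Δλ R_C²} · ( (e^{−Δλ R_C²} − e^{−Δλ R_B²})/(2Δλ) + ((Δλ)^{−(α+2)/2}/2) · (γ(α/2 + 1, Δλ R_B²) − γ(α/2 + 1, Δλ R_C²)) ), where γ(s, x) = ∫_0^x t^{s−1} e^{−t} dt is the lower incomplete gamma function. -/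
/-!
The integrand factors into an angular part `1 + k (ν - θ)²` and a radial part proportional to
`(1 + r ^ α) · 2cr e^{-cr²}` with `c = Δλ`, so the double integral is a product of two single
integrals. The angular one is a polynomial integral. The substitution `t = cr²` turns the
radial one into `∫ e^{-t}` plus `c^{-α/2} ∫ t^{α/2} e^{-t}`, the latter a difference of lower
incomplete gamma values.
-/

open Real intervalIntegral

noncomputable def lowerIncGamma (s x : ℝ) : ℝ :=
  ∫ t in (0 : ℝ)..x, t ^ (s - 1) * exp (-t)

lemma lowerIncGamma_sub_lowerIncGamma {s : ℝ} (hs : 1 ≤ s) (a b : ℝ) :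
    lowerIncGamma s b - lowerIncGamma s a = ∫ t in a..b, t ^ (s - 1) * exp (-t) := by
  have hint (x y : ℝ) :
      IntervalIntegrable (fun t => t ^ (s - 1) * exp (-t)) MeasureTheory.volume x y :=
    ((continuous_rpow_const (by linarith)).mul continuous_neg.rexp).intervalIntegrable x y
  exact integral_interval_sub_left (hint 0 b) (hint 0 a)

lemma integral_one_add_mul_sq_sub (ν Δ k : ℝ) :
    ∫ θ in (ν - Δ)..(ν + Δ), (1 + k * (ν - θ) ^ 2) = 2 * Δ + k * (2 * Δ ^ 3 / 3) := by
  rw [integral_comp_sub_left (fun x => 1 + k * x ^ 2) ν, sub_add_cancel_left, sub_sub_cancel,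
    integral_add intervalIntegrable_const
      ((by fun_prop : Continuous fun x : ℝ => k * x ^ 2).intervalIntegrable _ _),
    integral_const, integral_const_mul, integral_pow]
  simp only [smul_eq_mul, mul_one]
  ring

lemma integral_comp_mul_sq_mul {g : ℝ → ℝ} (hg : Continuous g) (c a b : ℝ) :
    ∫ r in a..b, g (c * r ^ 2) * (2 * c * r) = ∫ t in (c * a ^ 2)..(c * b ^ 2), g t :=
  integral_comp_mul_deriv (f := fun r => c * r ^ 2)
    (fun x _ => ((hasDerivAt_pow 2 x).const_mul c).congr_deriv (by ring))
    (by fun_prop) hg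

lemma integral_mul_exp_neg_mul_sq (c a b : ℝ) :
    ∫ r in a..b, 2 * c * r * exp (-(c * r ^ 2)) = exp (-(c * a ^ 2)) - exp (-(c * b ^ 2)) := by
  have := integral_comp_mul_sq_mul (g := fun t => exp (-t)) (by fun_prop) c a b
  simp only [mul_comm (exp _)] at this
  rw [this, integral_comp_neg (fun t => exp t), integral_exp]

lemma integral_rpow_mul_mul_exp_neg_mul_sq {c α a b : ℝ} (hc : 0 < c) (hα : 0 ≤ α)
    (ha : 0 ≤ a) (hb : 0 ≤ b) :
    ∫ r in a..b, r ^ α * (2 * c * r * exp (-(c * r ^ 2))) =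
      c ^ (-(α / 2)) *
        (lowerIncGamma (α / 2 + 1) (c * b ^ 2) - lowerIncGamma (α / 2 + 1) (c * a ^ 2)) := by
  have hpow {r : ℝ} (hr : 0 ≤ r) : r ^ α = c ^ (-(α / 2)) * (c * r ^ 2) ^ (α / 2) := by
    rw [mul_rpow hc.le (sq_nonneg r), ← mul_assoc, ← rpow_add hc, neg_add_cancel, rpow_zero,
      one_mul, ← rpow_natCast, ← rpow_mul hr]
    congr 1
    ring
  have hsub := integral_comp_mul_sq_mul (g := fun t => t ^ (α / 2) * exp (-t))
    ((continuous_rpow_const (by linarith)).mul continuous_neg.rexp) c a b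
  rw [lowerIncGamma_sub_lowerIncGamma (by linarith), add_sub_cancel_right, ← hsub,
    ← integral_const_mul]
  refine integral_congr fun r hr => ?_
  have hr : 0 ≤ r := (le_min ha hb).trans hr.1
  simp only [hpow hr]
  ring

lemma integral_one_add_rpow_mul_mul_exp_neg_mul_sq {c α a b : ℝ} (hc : 0 < c) (hα : 0 ≤ α)
    (ha : 0 ≤ a) (hb : 0 ≤ b) :
    ∫ r in a..b, (1 + r ^ α) * (2 * c * r * exp (-(c * r ^ 2))) =
      (exp (-(c * a ^ 2)) - exp (-(c * b ^ 2))) + c ^ (-(α / 2)) *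
        (lowerIncGamma (α / 2 + 1) (c * b ^ 2) - lowerIncGamma (α / 2 + 1) (c * a ^ 2)) := by
  simp only [add_mul, one_mul]
  rw [integral_add (Continuous.intervalIntegrable (by fun_prop) _ _) ?_,
    integral_mul_exp_neg_mul_sq, integral_rpow_mul_mul_exp_neg_mul_sq hc hα ha hb]
  exact ((continuous_rpow_const hα).mul (by fun_prop)).intervalIntegrable _ _

theorem nnnf_far_integral_general (M : ℕ) (η Δ lam α ν RC RB : ℝ)
    (hΔ : 0 < Δ) (hlam : 0 < lam) (hα : 0 < α)
    (hRC : 0 ≤ RC) (hR : RC < RB)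
    (f : ℝ → ℝ)
    (hf : ∀ r : ℝ, f r = 2 * Δ * lam * r * Real.exp (-(Δ * lam * (r ^ 2 - RC ^ 2))) /
        (1 - Real.exp (-(Δ * lam * (RB ^ 2 - RC ^ 2))))) :
    (1 / (2 * Δ)) *
      ∫ θ in (ν - Δ)..(ν + Δ), ∫ r in RC..RB,
        (η * (1 + r ^ α) / M) * (1 + π ^ 2 * (M : ℝ) ^ 2 * (ν - θ) ^ 2 / 12) * f r =
      (η * lam / (M * (1 - Real.exp (-(Δ * lam * (RB ^ 2 - RC ^ 2)))))) *
        (2 * Δ + π ^ 2 * (M : ℝ) ^ 2 * Δ ^ 3 / 18) *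
        (Real.exp (Δ * lam * RC ^ 2) *
          ((Real.exp (-(Δ * lam * RC ^ 2)) - Real.exp (-(Δ * lam * RB ^ 2))) / (2 * Δ * lam) +
            ((Δ * lam) ^ (-(α + 2) / 2) / 2) *
              ((∫ t in (0 : ℝ)..(Δ * lam * RB ^ 2), t ^ (α / 2 + 1 - 1) * Real.exp (-t)) -
                ∫ t in (0 : ℝ)..(Δ * lam * RC ^ 2), t ^ (α / 2 + 1 - 1) * Real.exp (-t)))) := by
  have hc : 0 < Δ * lam := mul_pos hΔ hlam
  have hsep (θ r : ℝ) :
      (η * (1 + r ^ α) / M) * (1 + π ^ 2 * (M : ℝ) ^ 2 * (ν - θ) ^ 2 / 12) * f r =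
        η * exp (Δ * lam * RC ^ 2) / M / (1 - exp (-(Δ * lam * (RB ^ 2 - RC ^ 2)))) *
          ((1 + π ^ 2 * (M : ℝ) ^ 2 / 12 * (ν - θ) ^ 2) *
            ((1 + r ^ α) * (2 * (Δ * lam) * r * exp (-(Δ * lam * r ^ 2))))) := by
    rw [hf r, show -(Δ * lam * (r ^ 2 - RC ^ 2)) = Δ * lam * RC ^ 2 + -(Δ * lam * r ^ 2) by ring,
      exp_add]
    ring
  have hpow : (Δ * lam) ^ (-(α + 2) / 2) = (Δ * lam) ^ (-(α / 2)) * (Δ * lam)⁻¹ := by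
    rw [show -(α + 2) / 2 = -(α / 2) + -1 by ring, rpow_add hc, rpow_neg_one]
  simp only [hsep, integral_const_mul, integral_mul_const, integral_one_add_mul_sq_sub,
    integral_one_add_rpow_mul_mul_exp_neg_mul_sq hc hα.le hRC (hRC.trans hR.le), hpow]
  unfold lowerIncGamma
  field_simp
  ring

theorem nnnf_far_integral (M : ℕ) (hM : 1 ≤ M) (η Δ lam α ν RC RB : ℝ)
    (hη : 0 < η) (hΔ : 0 < Δ) (hlam : 0 < lam) (hα : 0 < α)
    (hRC : 0 ≤ RC) (hR : RC < RB)
    (f : ℝ → ℝ)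
    (hf : ∀ r : ℝ, f r = 2 * Δ * lam * r * Real.exp (-(Δ * lam * (r ^ 2 - RC ^ 2))) /
        (1 - Real.exp (-(Δ * lam * (RB ^ 2 - RC ^ 2))))) :
    (1 / (2 * Δ)) *
      ∫ θ in (ν - Δ)..(ν + Δ), ∫ r in RC..RB,
        (η * (1 + r ^ α) / M) * (1 + π ^ 2 * (M : ℝ) ^ 2 * (ν - θ) ^ 2 / 12) * f r =
      (η * lam / (M * (1 - Real.exp (-(Δ * lam * (RB ^ 2 - RC ^ 2)))))) *
        (2 * Δ + π ^ 2 * (M : ℝ) ^ 2 * Δ ^ 3 / 18) *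
        (Real.exp (Δ * lam * RC ^ 2) *
          ((Real.exp (-(Δ * lam * RC ^ 2)) - Real.exp (-(Δ * lam * RB ^ 2))) / (2 * Δ * lam) +
            ((Δ * lam) ^ (-(α + 2) / 2) / 2) *
              ((∫ t in (0 : ℝ)..(Δ * lam * RB ^ 2), t ^ (α / 2 + 1 - 1) * Real.exp (-t)) -
                ∫ t in (0 : ℝ)..(Δ * lam * RC ^ 2), t ^ (α / 2 + 1 - 1) * Real.exp (-t)))) :=
  nnnf_far_integral_general M η Δ lam α ν RC RB hΔ hlam hα hRC hR f hf
end

section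
/- Let M ≥ 1 be a natural number and let η > 0, Δ > 0, λ > 0, α > 0, ν ∈ ℝ and 0 ≤ R_C < R_B be real numbers. Define the probability density f(r) = 2Δλ r e^{−Δλ(R_B² − r²)}/(1 − e^{−Δλ(R_B² − R_C²)}) on (R_C, R_B). Then (1/(2Δ)) ∫_{ν−Δ}^{ν+Δ} ∫_{R_C}^{R_B} (η(1+r^α)/M) · (1 + π² M² (ν−θ)²/12) · f(r) dr dθ = (η λ/(M(1 − e^{−Δλ(R_B² − R_C²)}))) · (2Δ + π² M² Δ³/18) · e^{−Δλ R_B²} · ( (e^{Δλ R_B²} − e^{Δλ R_C²})/(2Δλ) + Ω ), where Ω = ∫_{R_C}^{R_B} r^{α+1} e^{Δλ r²} dr. -/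
open Real intervalIntegral

/-!
The integrand factors into an angular part, a polynomial in `ν - θ`, and a radial part, so the
double integral is the product of two one-dimensional integrals. The angular one is elementary.
In the radial one, `f` is `r ↦ r e^{Δλ r²}` up to constants, so the `1` in `1 + r^α` integrates in
closed form (the antiderivative is `e^{Δλ r²} / (2Δλ)`) while `r^α` leaves the integral `Ω`.
-/

theorem integral_integral_mul (g h : ℝ → ℝ) (a b c d : ℝ) :
    ∫ θ in a..b, ∫ r in c..d, g θ * h r = (∫ θ in a..b, g θ) * ∫ r in c..d, h r := by
  simp only [integral_const_mul, integral_mul_const]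

theorem integral_one_add_mul_sub_sq (c ν Δ : ℝ) :
    ∫ θ in (ν - Δ)..(ν + Δ), (1 + c * (ν - θ) ^ 2) = 2 * Δ + 2 * c * Δ ^ 3 / 3 := by
  have hsq : ∫ θ in (ν - Δ)..(ν + Δ), (ν - θ) ^ 2 = 2 * Δ ^ 3 / 3 := by
    rw [integral_comp_sub_left (fun x : ℝ => x ^ 2), integral_pow]
    ring
  have hcont : Continuous fun θ : ℝ => c * (ν - θ) ^ 2 := by fun_prop
  rw [integral_add intervalIntegrable_const (hcont.intervalIntegrable _ _), integral_const_mul,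
    hsq, integral_const, smul_eq_mul]
  ring

theorem integral_mul_exp_mul_sq {a : ℝ} (ha : a ≠ 0) (c d : ℝ) :
    ∫ r in c..d, r * exp (a * r ^ 2) = (exp (a * d ^ 2) - exp (a * c ^ 2)) / (2 * a) := by
  have hderiv : ∀ r ∈ Set.uIcc c d,
      HasDerivAt (fun r => exp (a * r ^ 2) / (2 * a)) (r * exp (a * r ^ 2)) r := by
    intro r _
    refine ((((hasDerivAt_pow 2 r).const_mul a).exp).div_const (2 * a)).congr_deriv ?_
    field_simp
    norm_num
    ring
  rw [integral_eq_sub_of_hasDerivAt hderiv (Continuous.intervalIntegrable (by fun_prop) _ _)]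
  ring

theorem integral_one_add_rpow_mul_mul_exp {α a c d : ℝ} (hα : -1 < α) (ha : a ≠ 0)
    (hc : 0 ≤ c) (hd : 0 ≤ d) :
    ∫ r in c..d, (1 + r ^ α) * (r * exp (-(a * (d ^ 2 - r ^ 2)))) =
      exp (-(a * d ^ 2)) * ((exp (a * d ^ 2) - exp (a * c ^ 2)) / (2 * a) +
        ∫ r in c..d, r ^ (α + 1) * exp (a * r ^ 2)) := by
  have hsplit : ∀ r ∈ Set.uIcc c d, (1 + r ^ α) * (r * exp (-(a * (d ^ 2 - r ^ 2)))) =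
      exp (-(a * d ^ 2)) * (r * exp (a * r ^ 2) + r ^ (α + 1) * exp (a * r ^ 2)) := by
    intro r hr
    have hr0 : 0 ≤ r := (le_min hc hd).trans hr.1
    rw [rpow_add_one' hr0 (by linarith),
      show -(a * (d ^ 2 - r ^ 2)) = -(a * d ^ 2) + a * r ^ 2 by ring, exp_add]
    ring
  have hlin : Continuous fun r : ℝ => r * exp (a * r ^ 2) := by fun_prop
  have hpow : Continuous fun r : ℝ => r ^ (α + 1) * exp (a * r ^ 2) :=
    (continuous_rpow_const (by linarith)).mul (by fun_prop)
  rw [integral_congr hsplit, integral_const_mul,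
    integral_add (hlin.intervalIntegrable _ _) (hpow.intervalIntegrable _ _),
    integral_mul_exp_mul_sq ha]

theorem nnff_far_integral_general (M : ℕ) (η Δ lam α ν RC RB : ℝ)
    (hΔ : 0 < Δ) (hlam : 0 < lam) (hα : 0 < α)
    (hRC : 0 ≤ RC) (hR : RC < RB)
    (f : ℝ → ℝ)
    (hf : ∀ r : ℝ, f r = 2 * Δ * lam * r * Real.exp (-(Δ * lam * (RB ^ 2 - r ^ 2))) /
        (1 - Real.exp (-(Δ * lam * (RB ^ 2 - RC ^ 2))))) :
    (1 / (2 * Δ)) *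
      ∫ θ in (ν - Δ)..(ν + Δ), ∫ r in RC..RB,
        (η * (1 + r ^ α) / M) * (1 + π ^ 2 * (M : ℝ) ^ 2 * (ν - θ) ^ 2 / 12) * f r =
      (η * lam / (M * (1 - Real.exp (-(Δ * lam * (RB ^ 2 - RC ^ 2)))))) *
        (2 * Δ + π ^ 2 * (M : ℝ) ^ 2 * Δ ^ 3 / 18) *
        (Real.exp (-(Δ * lam * RB ^ 2)) *
          ((Real.exp (Δ * lam * RB ^ 2) - Real.exp (Δ * lam * RC ^ 2)) / (2 * Δ * lam) +
            ∫ r in RC..RB, r ^ (α + 1) * Real.exp (Δ * lam * r ^ 2))) := by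
  set D := 1 - exp (-(Δ * lam * (RB ^ 2 - RC ^ 2)))
  have hradial : ∀ r ∈ Set.uIcc RC RB, (1 + r ^ α) * f r =
      2 * (Δ * lam) / D * ((1 + r ^ α) * (r * exp (-(Δ * lam * (RB ^ 2 - r ^ 2))))) := by
    intro r _
    rw [hf]
    ring
  calc _ = 1 / (2 * Δ) * ∫ θ in (ν - Δ)..(ν + Δ), ∫ r in RC..RB,
          η / M * (1 + π ^ 2 * (M : ℝ) ^ 2 / 12 * (ν - θ) ^ 2) * ((1 + r ^ α) * f r) := by
        congr 1
        exact integral_congr fun θ _ => integral_congr fun r _ => by ring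
    _ = _ := by
        rw [integral_integral_mul, integral_const_mul, integral_one_add_mul_sub_sq,
          integral_congr hradial, integral_const_mul, integral_one_add_rpow_mul_mul_exp
            (by linarith) (by positivity) hRC (hRC.trans hR.le), mul_div_mul_comm η lam]
        field_simp
        ring

theorem nnff_far_integral (M : ℕ) (hM : 1 ≤ M) (η Δ lam α ν RC RB : ℝ)
    (hη : 0 < η) (hΔ : 0 < Δ) (hlam : 0 < lam) (hα : 0 < α)
    (hRC : 0 ≤ RC) (hR : RC < RB)
    (f : ℝ → ℝ)
    (hf : ∀ r : ℝ, f r = 2 * Δ * lam * r * Real.exp (-(Δ * lam * (RB ^ 2 - r ^ 2))) /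
        (1 - Real.exp (-(Δ * lam * (RB ^ 2 - RC ^ 2))))) :
    (1 / (2 * Δ)) *
      ∫ θ in (ν - Δ)..(ν + Δ), ∫ r in RC..RB,
        (η * (1 + r ^ α) / M) * (1 + π ^ 2 * (M : ℝ) ^ 2 * (ν - θ) ^ 2 / 12) * f r =
      (η * lam / (M * (1 - Real.exp (-(Δ * lam * (RB ^ 2 - RC ^ 2)))))) *
        (2 * Δ + π ^ 2 * (M : ℝ) ^ 2 * Δ ^ 3 / 18) *
        (Real.exp (-(Δ * lam * RB ^ 2)) *
          ((Real.exp (Δ * lam * RB ^ 2) - Real.exp (Δ * lam * RC ^ 2)) / (2 * Δ * lam) +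
            ∫ r in RC..RB, r ^ (α + 1) * Real.exp (Δ * lam * r ^ 2))) :=
  nnff_far_integral_general M η Δ lam α ν RC RB hΔ hlam hα hRC hR f hf
end

section
/- Let c > 0, α > 0 and 0 ≤ R_C < R_B be real numbers. Then (∫_{R_C}^{R_B} r^{α+1} e^{−c r²} dr) · (∫_{R_C}^{R_B} r dr) < (∫_{R_C}^{R_B} r^{α+1} dr) · (∫_{R_C}^{R_B} r e^{−c r²} dr). -/
open Real intervalIntegral

theorem chebyshev_far_nnnf (c α RC RB : ℝ) (hc : 0 < c) (hα : 0 < α)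
    (hRC : 0 ≤ RC) (hR : RC < RB) :
    (∫ r in RC..RB, r ^ (α + 1) * Real.exp (-(c * r ^ 2))) * (∫ r in RC..RB, r) <
      (∫ r in RC..RB, r ^ (α + 1)) * ∫ r in RC..RB, r * Real.exp (-(c * r ^ 2)) := by
  set F : ℝ → ℝ := fun r => r ^ (α + 1) with hF
  set G : ℝ → ℝ := fun r => Real.exp (-(c * r ^ 2)) with hG
  set W : ℝ → ℝ := fun r : ℝ => r with hW
  have hFc : Continuous F := Real.continuous_rpow_const (by linarith)
  have hGc : Continuous G := by
    apply Real.continuous_exp.comp; continuity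
  have hWc : Continuous W := continuous_id
  -- the four antiderivative functions
  set I1 : ℝ → ℝ := fun t => ∫ r in RC..t, F r with hI1
  set I2 : ℝ → ℝ := fun t => ∫ r in RC..t, W r * G r with hI2
  set I3 : ℝ → ℝ := fun t => ∫ r in RC..t, F r * G r with hI3
  set I4 : ℝ → ℝ := fun t => ∫ r in RC..t, W r with hI4
  set Φ : ℝ → ℝ := fun t => I1 t * I2 t - I3 t * I4 t with hΦ
  have hd1 : ∀ t, HasDerivAt I1 (F t) t := fun t =>
    (hFc.integral_hasStrictDerivAt RC t).hasDerivAt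
  have hd2 : ∀ t, HasDerivAt I2 (W t * G t) t := fun t =>
    ((hWc.mul hGc).integral_hasStrictDerivAt RC t).hasDerivAt
  have hd3 : ∀ t, HasDerivAt I3 (F t * G t) t := fun t =>
    ((hFc.mul hGc).integral_hasStrictDerivAt RC t).hasDerivAt
  have hd4 : ∀ t, HasDerivAt I4 (W t) t := fun t =>
    (hWc.integral_hasStrictDerivAt RC t).hasDerivAt
  have hdΦ : ∀ t, HasDerivAt Φ
      (F t * I2 t + I1 t * (W t * G t) - (F t * G t * I4 t + I3 t * W t)) t := fun t =>
    ((hd1 t).mul (hd2 t)).sub ((hd3 t).mul (hd4 t))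
  -- the derivative equals a single integral with positive integrand
  have hderiv_pos : ∀ t ∈ Set.Ioo RC RB, 0 < deriv Φ t := by
    intro t ht
    rw [(hdΦ t).deriv]
    have hInt : ∀ h : ℝ → ℝ, Continuous h → IntervalIntegrable h MeasureTheory.volume RC t :=
      fun h hh => hh.intervalIntegrable RC t
    have key : F t * I2 t + I1 t * (W t * G t) - (F t * G t * I4 t + I3 t * W t)
        = ∫ s in RC..t, (F t * W s - W t * F s) * (G s - G t) := by
      have e1 : F t * I2 t = ∫ s in RC..t, F t * (W s * G s) := by
        rw [hI2]; exact (intervalIntegral.integral_const_mul _ _).symm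
      have e2 : I1 t * (W t * G t) = ∫ s in RC..t, F s * (W t * G t) := by
        rw [hI1]; exact (intervalIntegral.integral_mul_const _ _).symm
      have e3 : F t * G t * I4 t = ∫ s in RC..t, F t * G t * W s := by
        rw [hI4]; exact (intervalIntegral.integral_const_mul _ _).symm
      have e4 : I3 t * W t = ∫ s in RC..t, F s * G s * W t := by
        rw [hI3]; exact (intervalIntegral.integral_mul_const _ _).symm
      rw [e1, e2, e3, e4,
        ← intervalIntegral.integral_add (hInt _ (by fun_prop)) (hInt _ (by fun_prop)),
        ← intervalIntegral.integral_add (hInt _ (by fun_prop)) (hInt _ (by fun_prop)),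
        ← intervalIntegral.integral_sub (hInt _ (by fun_prop)) (hInt _ (by fun_prop))]
      congr 1; funext s; ring
    rw [key]
    apply intervalIntegral_pos_of_pos_on
    · exact Continuous.intervalIntegrable (by fun_prop) RC t
    · intro s hs
      have hs0 : 0 < s := lt_of_le_of_lt hRC hs.1
      have hst : s < t := hs.2
      have ht0 : 0 < t := hs0.trans hst
      apply mul_pos
      · have hFW : F t * W s - W t * F s = t * s * (t ^ α - s ^ α) := by
          simp only [hF, hW]
          rw [Real.rpow_add_one ht0.ne', Real.rpow_add_one hs0.ne']
          ring
        rw [hFW]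
        apply mul_pos (mul_pos ht0 hs0)
        have := Real.rpow_lt_rpow hs0.le hst hα
        linarith
      · have hsq : s ^ 2 < t ^ 2 := by nlinarith
        have : -(c * t ^ 2) < -(c * s ^ 2) := by nlinarith
        have := Real.exp_lt_exp.mpr this
        simp only [hG]; linarith
    · exact ht.1
  -- Φ is strictly monotone on [RC, RB]
  have hmono : StrictMonoOn Φ (Set.Icc RC RB) := by
    apply strictMonoOn_of_deriv_pos (convex_Icc RC RB)
    · exact Continuous.continuousOn (by
        have : Continuous Φ := by
          have h1 : Differentiable ℝ Φ := fun t => (hdΦ t).differentiableAt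
          exact h1.continuous
        exact this)
    · intro t ht
      rw [interior_Icc] at ht
      exact hderiv_pos t ht
  have h0 : Φ RC = 0 := by
    simp [hΦ, hI1, hI2, hI3, hI4]
  have := hmono (Set.left_mem_Icc.mpr hR.le) (Set.right_mem_Icc.mpr hR.le) hR
  rw [h0] at this
  have hfin : 0 < I1 RB * I2 RB - I3 RB * I4 RB := this
  have hgoal : I3 RB * I4 RB < I1 RB * I2 RB := by linarith
  simpa [hI1, hI2, hI3, hI4, hF, hG, hW] using hgoal
end

section
/- Let α > 0 and 0 ≤ R_C < R_B be real numbers. Then lim_{c → 0⁺} e^{−c R_B²} · ( (e^{c R_B²} − e^{c R_C²})/(2c) + ∫_{R_C}^{R_B} r^{α+1} e^{c r²} dr ) = (R_B² − R_C²)/2 + (R_B^{α+2} − R_C^{α+2})/(α+2). -/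
open Real Filter intervalIntegral

theorem limit_LB_nnff (α RC RB : ℝ) (hα : 0 < α) (hRC : 0 ≤ RC) (hR : RC < RB) :
    Tendsto (fun c : ℝ =>
        Real.exp (-(c * RB ^ 2)) *
          ((Real.exp (c * RB ^ 2) - Real.exp (c * RC ^ 2)) / (2 * c) +
            ∫ r in RC..RB, r ^ (α + 1) * Real.exp (c * r ^ 2)))
      (nhdsWithin 0 (Set.Ioi 0))
      (nhds ((RB ^ 2 - RC ^ 2) / 2 + (RB ^ (α + 2) - RC ^ (α + 2)) / (α + 2))) := by
  have hexp : Tendsto (fun c : ℝ => Real.exp (-(c * RB ^ 2)))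
      (nhdsWithin 0 (Set.Ioi 0)) (nhds 1) := by
    have : ContinuousAt (fun c : ℝ => Real.exp (-(c * RB ^ 2))) 0 := by fun_prop
    have h := this.continuousWithinAt (s := Set.Ioi 0)
    rw [ContinuousWithinAt] at h
    simpa using h
  -- first summand
  have hf : HasDerivAt (fun c : ℝ => Real.exp (c * RB ^ 2) - Real.exp (c * RC ^ 2))
      (RB ^ 2 - RC ^ 2) 0 := by
    have h1 : HasDerivAt (fun c : ℝ => Real.exp (c * RB ^ 2)) (RB ^ 2) 0 := by
      simpa using ((hasDerivAt_mul_const (RB ^ 2) (x := (0:ℝ))).exp)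
    have h2 : HasDerivAt (fun c : ℝ => Real.exp (c * RC ^ 2)) (RC ^ 2) 0 := by
      simpa using ((hasDerivAt_mul_const (RC ^ 2) (x := (0:ℝ))).exp)
    exact h1.sub h2
  have hA : Tendsto (fun c : ℝ => (Real.exp (c * RB ^ 2) - Real.exp (c * RC ^ 2)) / (2 * c))
      (nhdsWithin 0 (Set.Ioi 0)) (nhds ((RB ^ 2 - RC ^ 2) / 2)) := by
    have hslope := hasDerivAt_iff_tendsto_slope.mp hf
    have hmono : nhdsWithin (0:ℝ) (Set.Ioi 0) ≤ nhdsWithin 0 {0}ᶜ :=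
      nhdsWithin_mono 0 (fun x hx => ne_of_gt hx)
    have h2 := (hslope.mono_left hmono).div_const 2
    refine h2.congr (fun c => ?_)
    simp only [slope_def_field]
    field_simp
    ring
  -- integral summand
  have hcont : Continuous (fun p : ℝ × ℝ =>
      p.2 ^ (α + 1) * Real.exp (p.1 * p.2 ^ 2)) := by
    have h1 : Continuous (fun p : ℝ × ℝ => p.2 ^ (α + 1)) :=
      (Real.continuous_rpow_const (by linarith)).comp continuous_snd
    exact h1.mul (by fun_prop)
  have hB₀ : Continuous (fun c : ℝ => ∫ r in RC..RB, r ^ (α + 1) * Real.exp (c * r ^ 2)) :=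
    intervalIntegral.continuous_parametric_intervalIntegral_of_continuous'
      (f := fun c r => r ^ (α + 1) * Real.exp (c * r ^ 2)) hcont RC RB
  have hval : (∫ r in RC..RB, r ^ (α + 1))
      = (RB ^ (α + 2) - RC ^ (α + 2)) / (α + 2) := by
    rw [integral_rpow (Or.inl (by linarith))]
    ring_nf
  have hB : Tendsto (fun c : ℝ => ∫ r in RC..RB, r ^ (α + 1) * Real.exp (c * r ^ 2))
      (nhdsWithin 0 (Set.Ioi 0)) (nhds ((RB ^ (α + 2) - RC ^ (α + 2)) / (α + 2))) := by
    have := (hB₀.continuousAt (x := 0)).continuousWithinAt (s := Set.Ioi 0)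
    rw [ContinuousWithinAt] at this
    simpa [hval] using this
  have := hexp.mul (hA.add hB)
  simpa using this
end
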